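/- arXiv:1007.0372 — 6 statements merged into one kernel-verified Lean document; each statement's English description precedes it below -/
import Mathlib

section
/- Let y ∈ [0,1]ⁿ with yᵢ and yⱼ non-integral for some i < j, let a > 0, and define g(δ) = F(y₁,…,yᵢ+δ,…,yⱼ−aδ,…,yₙ) where F(y) = Σₖ wₖ (1 − ∏_{j : k ∈ Sⱼ} (1 − yⱼ)) with all weights wₖ ≥ 0. Then g is a convex function of δ (on any interval where all coordinates remain in [0,1]). -/
open Finset

/-- The coverage objective `F(y) = Σₖ wₖ (1 - ∏_{j : k ∈ Sⱼ} (1 - yⱼ))`. -/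
def coverF {n m : ℕ} (S : Fin n → Finset (Fin m)) (w : Fin m → ℝ)
    (y : Fin n → ℝ) : ℝ :=
  ∑ k : Fin m, w k * (1 - ∏ j ∈ Finset.univ.filter (fun j => k ∈ S j), (1 - y j))

/-- A quadratic with nonnegative leading coefficient is convex. -/
lemma quadratic_convexOn {s : Set ℝ} (hs : Convex ℝ s) {c : ℝ} (hc : 0 ≤ c) (b d : ℝ) :
    ConvexOn ℝ s (fun x => c * x ^ 2 + b * x + d) := by
  refine ⟨hs, fun x _ z _ t u ht hu htu => ?_⟩
  simp only [smul_eq_mul]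
  have key : t * (c * x ^ 2 + b * x + d) + u * (c * z ^ 2 + b * z + d)
      - (c * (t * x + u * z) ^ 2 + b * (t * x + u * z) + d) = c * t * u * (x - z) ^ 2 := by
    linear_combination (d - c * t * x ^ 2 - c * u * z ^ 2) * htu
  nlinarith [mul_nonneg (mul_nonneg hc (mul_nonneg ht hu)) (sq_nonneg (x - z))]

lemma convexOn_finset_sum {ι : Type*} (t : Finset ι) {s : Set ℝ} (hs : Convex ℝ s)
    {f : ι → ℝ → ℝ} (h : ∀ i ∈ t, ConvexOn ℝ s (f i)) :
    ConvexOn ℝ s (fun x => ∑ i ∈ t, f i x) := by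
  classical
  induction t using Finset.cons_induction with
  | empty => simpa using convexOn_const 0 hs
  | cons i t hi ih =>
    simp only [Finset.sum_cons]
    exact (h i (Finset.mem_cons_self i t)).add
      (ih fun j hj => h j (Finset.mem_cons_of_mem hj))

/-- Moving mass `δ` onto coordinate `i` and `a·δ` off coordinate `j` of a
fractional solution yields a convex function of `δ`, on the interval where all
coordinates stay in `[0,1]`. -/
theorem pair_move_convex {n m : ℕ} (S : Fin n → Finset (Fin m)) (w : Fin m → ℝ)
    (hw : ∀ k, 0 ≤ w k) (y : Fin n → ℝ) (hy : ∀ j, y j ∈ Set.Icc (0 : ℝ) 1)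
    (i j : Fin n) (hij : i < j)
    (hi : y i ∉ (Set.range (Int.cast : ℤ → ℝ))) (hj : y j ∉ (Set.range (Int.cast : ℤ → ℝ)))
    (a : ℝ) (ha : 0 < a) :
    ConvexOn ℝ
      {δ : ℝ | ∀ k, Function.update (Function.update y i (y i + δ)) j (y j - a * δ) k ∈ Set.Icc (0 : ℝ) 1}
      (fun δ => coverF S w (Function.update (Function.update y i (y i + δ)) j (y j - a * δ))) := by
  have hne : i ≠ j := ne_of_lt hij
  set e : Fin n → ℝ := fun k => if k = j then -a else if k = i then 1 else 0 with he
  have hcoord : ∀ (δ : ℝ) (k : Fin n),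
      Function.update (Function.update y i (y i + δ)) j (y j - a * δ) k = y k + δ * e k := by
    intro δ k
    rcases eq_or_ne k j with rfl | hkj
    · simp [Function.update_apply, e]; ring
    · rcases eq_or_ne k i with rfl | hki
      · simp [Function.update_apply, hkj, e, hne]
      · simp [Function.update_apply, hkj, hki, e]
  set s : Set ℝ := {δ : ℝ | ∀ k, Function.update (Function.update y i (y i + δ)) j (y j - a * δ) k ∈ Set.Icc (0 : ℝ) 1} with hsdef
  have hsconv : Convex ℝ s := by
    intro x hx z hz t u ht hu htu
    intro k
    have hx' := hx k
    have hz' := hz k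
    rw [hcoord] at hx' hz' ⊢
    have hmem := (convex_Icc (0 : ℝ) 1) hx' hz' ht hu htu
    have : y k + (t • x + u • z) * e k = t • (y k + x * e k) + u • (y k + z * e k) := by
      simp only [smul_eq_mul]
      linear_combination (y k) * htu.symm
    rw [this]
    exact hmem
  -- rewrite the objective
  have hfun : (fun δ => coverF S w (Function.update (Function.update y i (y i + δ)) j (y j - a * δ)))
      = fun δ => ∑ k : Fin m, w k * (1 - ∏ l ∈ Finset.univ.filter (fun l => k ∈ S l), (1 - (y l + δ * e l))) := by
    funext δ
    simp only [coverF, hcoord]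
  rw [hfun]
  apply convexOn_finset_sum _ hsconv
  intro k _
  set T : Finset (Fin n) := Finset.univ.filter (fun l => k ∈ S l) with hT
  have hfac : ∀ l : Fin n, 0 ≤ 1 - y l := fun l => by have := (hy l).2; linarith
  by_cases hiT : i ∈ T
  · by_cases hjT : j ∈ T
    · -- both coordinates in play: quadratic with nonneg leading coefficient
      have hjT' : j ∈ T.erase i := Finset.mem_erase.mpr ⟨hne.symm, hjT⟩
      set C : ℝ := ∏ l ∈ (T.erase i).erase j, (1 - y l) with hC
      have hC0 : 0 ≤ C := Finset.prod_nonneg fun l _ => hfac l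
      have hprod : ∀ δ : ℝ, ∏ l ∈ T, (1 - (y l + δ * e l))
          = (1 - (y i + δ * 1)) * ((1 - (y j + δ * (-a))) * C) := by
        intro δ
        rw [← Finset.mul_prod_erase T _ hiT, ← Finset.mul_prod_erase (T.erase i) _ hjT']
        have hei : e i = 1 := by simp [e, hne]
        have hej : e j = -a := by simp [e]
        rw [hei, hej]
        congr 1
        congr 1
        refine Finset.prod_congr rfl fun l hl => ?_
        obtain ⟨hlj, hli, _⟩ : l ≠ j ∧ l ≠ i ∧ l ∈ T := by
          have h1 := Finset.mem_erase.mp hl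
          have h2 := Finset.mem_erase.mp h1.2
          exact ⟨h1.1, h2.1, h2.2⟩
        simp [e, hli, hlj]
      have heq : (fun δ : ℝ => w k * (1 - ∏ l ∈ T, (1 - (y l + δ * e l))))
          = fun δ : ℝ => (w k * (a * C)) * δ ^ 2
              + (w k * (C * (1 - y j) - a * C * (1 - y i))) * δ
              + w k * (1 - (1 - y i) * (1 - y j) * C) := by
        funext δ
        rw [hprod δ]
        ring
      rw [heq]
      exact quadratic_convexOn hsconv (mul_nonneg (hw k) (mul_nonneg ha.le hC0)) _ _
    · -- only i in play: affine
      set C : ℝ := ∏ l ∈ T.erase i, (1 - y l) with hC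
      have hprod : ∀ δ : ℝ, ∏ l ∈ T, (1 - (y l + δ * e l)) = (1 - (y i + δ * 1)) * C := by
        intro δ
        rw [← Finset.mul_prod_erase T _ hiT]
        have hei : e i = 1 := by simp [e, hne]
        rw [hei]
        congr 1
        refine Finset.prod_congr rfl fun l hl => ?_
        obtain ⟨hli, hlT⟩ := Finset.mem_erase.mp hl
        have hlj : l ≠ j := fun h => hjT (h ▸ hlT)
        simp [e, hli, hlj]
      have heq : (fun δ : ℝ => w k * (1 - ∏ l ∈ T, (1 - (y l + δ * e l))))
          = fun δ : ℝ => (0 : ℝ) * δ ^ 2 + (w k * C) * δ + w k * (1 - (1 - y i) * C) := by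
        funext δ
        rw [hprod δ]
        ring
      rw [heq]
      exact quadratic_convexOn hsconv le_rfl _ _
  · by_cases hjT : j ∈ T
    · -- only j in play: affine
      set C : ℝ := ∏ l ∈ T.erase j, (1 - y l) with hC
      have hprod : ∀ δ : ℝ, ∏ l ∈ T, (1 - (y l + δ * e l)) = (1 - (y j + δ * (-a))) * C := by
        intro δ
        rw [← Finset.mul_prod_erase T _ hjT]
        have hej : e j = -a := by simp [e]
        rw [hej]
        congr 1
        refine Finset.prod_congr rfl fun l hl => ?_
        obtain ⟨hlj, hlT⟩ := Finset.mem_erase.mp hl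
        have hli : l ≠ i := fun h => hiT (h ▸ hlT)
        simp [e, hli, hlj]
      have heq : (fun δ : ℝ => w k * (1 - ∏ l ∈ T, (1 - (y l + δ * e l))))
          = fun δ : ℝ => (0 : ℝ) * δ ^ 2 + (-(w k * C * a)) * δ + w k * (1 - (1 - y j) * C) := by
        funext δ
        rw [hprod δ]
        ring
      rw [heq]
      exact quadratic_convexOn hsconv le_rfl _ _
    · -- constant
      have hprod : ∀ δ : ℝ, ∏ l ∈ T, (1 - (y l + δ * e l)) = ∏ l ∈ T, (1 - y l) := by
        intro δ
        refine Finset.prod_congr rfl fun l hl => ?_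
        have hli : l ≠ i := fun h => hiT (h ▸ hl)
        have hlj : l ≠ j := fun h => hjT (h ▸ hl)
        simp [e, hli, hlj]
      have heq : (fun δ : ℝ => w k * (1 - ∏ l ∈ T, (1 - (y l + δ * e l))))
          = fun δ : ℝ => (0 : ℝ) * δ ^ 2 + (0 : ℝ) * δ + w k * (1 - ∏ l ∈ T, (1 - y l)) := by
        funext δ
        rw [hprod δ]
        ring
      rw [heq]
      exact quadratic_convexOn hsconv le_rfl _ _
end

section
/- Let S₁,…,Sₙ be finite subsets of a finite set of elements with weights wₖ ≥ 0, and let y* ∈ [0,1]ⁿ. Let W = Σₖ wₖ · min(1, Σ_{j : k ∈ Sⱼ} y*ⱼ) denote the LP coverage value assuming each element's coverage indicator xₖ = min(1, Σ_{j:k∈Sⱼ} y*ⱼ). Then F(y*) = Σₖ wₖ (1 − ∏_{j : k ∈ Sⱼ} (1 − y*ⱼ)) ≥ (1 − 1/e) · W. -/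
open Finset

lemma key_cover_ineq {ι : Type*} (T : Finset ι) (y : ι → ℝ)
    (hy : ∀ j ∈ T, y j ∈ Set.Icc (0 : ℝ) 1) :
    1 - ∏ j ∈ T, (1 - y j) ≥ (1 - 1 / Real.exp 1) * min 1 (∑ j ∈ T, y j) := by
  set s := ∑ j ∈ T, y j with hs
  have hs0 : 0 ≤ s := Finset.sum_nonneg fun j hj => (hy j hj).1
  set t := min 1 s with ht
  have ht0 : 0 ≤ t := le_min zero_le_one hs0
  have ht1 : t ≤ 1 := min_le_left _ _
  have hts : t ≤ s := min_le_right _ _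
  -- ∏ (1 - y j) ≤ exp (-s)
  have hprod : ∏ j ∈ T, (1 - y j) ≤ Real.exp (-s) := by
    rw [hs, ← Finset.sum_neg_distrib, Real.exp_sum]
    apply Finset.prod_le_prod
    · intro j hj; linarith [(hy j hj).2]
    · intro j hj; linarith [Real.add_one_le_exp (-y j)]
  have hmono : Real.exp (-s) ≤ Real.exp (-t) := Real.exp_le_exp.2 (by linarith)
  -- exp (-t) ≤ 1 - (1 - 1/e) * t by convexity of exp
  have hconv : Real.exp (-t) ≤ 1 - (1 - 1 / Real.exp 1) * t := by
    calc Real.exp (-t) = Real.exp ((1 - t) * 0 + t * (-1)) := by ring_nf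
      _ ≤ (1 - t) * Real.exp 0 + t * Real.exp (-1) := convexOn_exp.2 (Set.mem_univ _)
          (Set.mem_univ _) (by linarith) ht0 (by ring)
      _ = 1 - (1 - 1 / Real.exp 1) * t := by
          rw [Real.exp_zero, Real.exp_neg]; field_simp; ring
  have : ∏ j ∈ T, (1 - y j) ≤ 1 - (1 - 1 / Real.exp 1) * t :=
    le_trans hprod (le_trans hmono hconv)
  linarith

/-- The expected covered weight `F(y*)` under independent rounding is at least
`(1 - 1/e)` times the LP coverage value `W = Σₖ wₖ · min(1, Σ_{j : k ∈ Sⱼ} y*ⱼ)`. -/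
theorem coverF_ge_one_sub_inv_e_mul_LP {n m : ℕ}
    (S : Fin n → Finset (Fin m)) (w : Fin m → ℝ) (hw : ∀ k, 0 ≤ w k)
    (y : Fin n → ℝ) (hy : ∀ j, y j ∈ Set.Icc (0 : ℝ) 1) :
    ∑ k : Fin m, w k * (1 - ∏ j ∈ Finset.univ.filter (fun j => k ∈ S j), (1 - y j))
      ≥ (1 - 1 / Real.exp 1) *
        ∑ k : Fin m, w k * min 1 (∑ j ∈ Finset.univ.filter (fun j => k ∈ S j), y j) := by
  rw [Finset.mul_sum]
  apply Finset.sum_le_sum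
  intro k _
  rw [← mul_assoc, mul_comm (1 - 1 / Real.exp 1) (w k), mul_assoc]
  exact mul_le_mul_of_nonneg_left
    (key_cover_ineq _ y fun j _ => hy j) (hw k)
end

section
/- Let y ∈ [0,1]ⁿ, let c ∈ ℝ_{>0}ⁿ be positive costs, and suppose yᵢ, yⱼ ∈ (0,1) for some i ≠ j. Then there exist δ > 0 and an updated vector y' obtained from y by setting y'ᵢ = yᵢ ± δ/cᵢ and y'ⱼ = yⱼ ∓ δ/cⱼ (signs opposite), such that y' ∈ [0,1]ⁿ, at least one of y'ᵢ, y'ⱼ lies in {0,1}, and cᵢ y'ᵢ + cⱼ y'ⱼ = cᵢ yᵢ + cⱼ yⱼ. -/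
/-- Weighted pair-rounding step: for two fractional coordinates one can move
mass at rates inversely proportional to the costs (in opposite directions),
staying in `[0,1]ⁿ`, making one of the two coordinates integral, and preserving
`cᵢyᵢ + cⱼyⱼ`. -/
theorem weighted_pair_rounding_step {n : ℕ} (y : Fin n → ℝ)
    (hy : ∀ k, y k ∈ Set.Icc (0 : ℝ) 1) (c : Fin n → ℝ) (hc : ∀ k, 0 < c k)
    (i j : Fin n) (hij : i ≠ j)
    (hi : y i ∈ Set.Ioo (0 : ℝ) 1) (hj : y j ∈ Set.Ioo (0 : ℝ) 1) :
    ∃ δ : ℝ, 0 < δ ∧ ∃ ε : ℝ, (ε = 1 ∨ ε = -1) ∧ ∃ y' : Fin n → ℝ,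
      y' i = y i + ε * (δ / c i) ∧
      y' j = y j - ε * (δ / c j) ∧
      (∀ k, k ≠ i → k ≠ j → y' k = y k) ∧
      (∀ k, y' k ∈ Set.Icc (0 : ℝ) 1) ∧
      (y' i = 0 ∨ y' i = 1 ∨ y' j = 0 ∨ y' j = 1) ∧
      c i * y' i + c j * y' j = c i * y i + c j * y j := by
  obtain ⟨hi0, hi1⟩ := hi
  obtain ⟨hj0, hj1⟩ := hj
  have hci := hc i
  have hcj := hc j
  set δ : ℝ := min (c i * (1 - y i)) (c j * y j) with hδdef
  have hδpos : 0 < δ := lt_min (by nlinarith) (by nlinarith)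
  have hδ1 : δ ≤ c i * (1 - y i) := min_le_left _ _
  have hδ2 : δ ≤ c j * y j := min_le_right _ _
  refine ⟨δ, hδpos, 1, Or.inl rfl, fun k => if k = i then y i + δ / c i
    else if k = j then y j - δ / c j else y k, ?_, ?_, ?_, ?_, ?_, ?_⟩
  · simp
  · simp [hij.symm]
  · intro k hki hkj; simp [hki, hkj]
  · intro k
    by_cases hki : k = i
    · simp only [if_pos hki]
      constructor
      · have : 0 < δ / c i := div_pos hδpos hci
        linarith
      · have : δ / c i ≤ 1 - y i := (div_le_iff₀' hci).2 hδ1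
        linarith
    · by_cases hkj : k = j
      · simp only [if_neg hki, if_pos hkj]
        constructor
        · have : δ / c j ≤ y j := (div_le_iff₀' hcj).2 hδ2
          linarith
        · have : 0 < δ / c j := div_pos hδpos hcj
          linarith
      · simpa [hki, hkj] using hy k
  · rcases min_cases (c i * (1 - y i)) (c j * y j) with ⟨h, _⟩ | ⟨h, _⟩
    · right; left
      simp only [if_pos rfl, ↓reduceIte]
      rw [hδdef, h]
      field_simp
      ring
    · right; right; left
      simp only [if_neg hij.symm, if_pos rfl, ↓reduceIte]
      rw [hδdef, h]
      field_simp
      ring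
  · simp only [if_pos rfl, if_neg hij.symm, ↓reduceIte]
    field_simp
    ring
end

section
/- Let y ∈ [0,1]ⁿ with Σᵢ cᵢyᵢ = L for positive costs cᵢ, and let F(y) = Σₖ wₖ(1 − ∏_{j : k ∈ Sⱼ}(1 − yⱼ)) with wₖ ≥ 0. Then there exists ỹ ∈ {0,1}ⁿ such that Σᵢ cᵢ ỹᵢ ≤ L + maxᵢ cᵢ and F(ỹ) ≥ F(y). -/
open Finset

lemma affine_one {n m : ℕ} (S : Fin n → Finset (Fin m)) (w : Fin m → ℝ)
    (hw : ∀ k, 0 ≤ w k) (y : Fin n → ℝ) (hy1 : ∀ l, y l ≤ 1) (i : Fin n) :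
    ∃ B D : ℝ, 0 ≤ B ∧ ∀ s : ℝ,
      coverF S w (Function.update y i s) = B * s + D := by
  classical
  set T : Fin m → Finset (Fin n) := fun k => univ.filter (fun j => k ∈ S j) with hT
  set R : Fin m → ℝ := fun k => ∏ l ∈ (T k).erase i, (1 - y l) with hR
  have hR0 : ∀ k, 0 ≤ R k := fun k => Finset.prod_nonneg (fun l _ => by linarith [hy1 l])
  refine ⟨∑ k, (if i ∈ T k then w k * R k else 0),
          ∑ k, (if i ∈ T k then w k - w k * R k
                else w k * (1 - ∏ l ∈ T k, (1 - y l))), ?_, ?_⟩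
  · refine Finset.sum_nonneg fun k _ => ?_
    split
    · exact mul_nonneg (hw k) (hR0 k)
    · exact le_rfl
  · intro s
    rw [coverF, Finset.sum_mul, ← Finset.sum_add_distrib]
    refine Finset.sum_congr rfl fun k _ => ?_
    by_cases hik : i ∈ T k
    · have hprod : ∏ l ∈ T k, (1 - Function.update y i s l)
          = (1 - s) * R k := by
        rw [← Finset.mul_prod_erase _ _ hik, Function.update_self]
        congr 1
        exact Finset.prod_congr rfl fun l hl => by
          rw [Function.update_of_ne (Finset.ne_of_mem_erase hl)]
      rw [hT] at hik
      simp only [show i ∈ T k from hik, if_true] at *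
      rw [hprod]; ring
    · have hprod : ∏ l ∈ T k, (1 - Function.update y i s l)
          = ∏ l ∈ T k, (1 - y l) :=
        Finset.prod_congr rfl fun l hl => by
          rw [Function.update_of_ne (by rintro rfl; exact hik hl)]
      rw [hT] at hik
      simp only [show i ∉ T k from hik, if_false]
      rw [hprod]; ring

lemma affine_two {n m : ℕ} (S : Fin n → Finset (Fin m)) (w : Fin m → ℝ)
    (hw : ∀ k, 0 ≤ w k) (y : Fin n → ℝ) (hy1 : ∀ l, y l ≤ 1)
    (i j : Fin n) (hij : i ≠ j) :
    ∃ A B C D : ℝ, A ≤ 0 ∧ ∀ s t : ℝ,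
      coverF S w (Function.update (Function.update y i s) j t)
        = A * (s * t) + B * s + C * t + D := by
  classical
  set T : Fin m → Finset (Fin n) := fun k => univ.filter (fun l => k ∈ S l) with hT
  set R : Fin m → ℝ := fun k => ∏ l ∈ ((T k).erase i).erase j, (1 - y l) with hR
  have hR0 : ∀ k, 0 ≤ R k := fun k => Finset.prod_nonneg (fun l _ => by linarith [hy1 l])
  refine ⟨∑ k, (if i ∈ T k ∧ j ∈ T k then -(w k * R k) else 0),
          ∑ k, (if i ∈ T k ∧ j ∈ T k then w k * R k
                else if i ∈ T k then w k * R k else 0),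
          ∑ k, (if i ∈ T k ∧ j ∈ T k then w k * R k
                else if j ∈ T k then w k * R k else 0),
          ∑ k, (if i ∈ T k ∨ j ∈ T k then w k - w k * R k
                else w k * (1 - ∏ l ∈ T k, (1 - y l))), ?_, ?_⟩
  · refine Finset.sum_nonpos fun k _ => ?_
    split
    · simp only [neg_nonpos]; exact mul_nonneg (hw k) (hR0 k)
    · exact le_rfl
  · intro s t
    rw [coverF, Finset.sum_mul, Finset.sum_mul, Finset.sum_mul,
        ← Finset.sum_add_distrib, ← Finset.sum_add_distrib, ← Finset.sum_add_distrib]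
    refine Finset.sum_congr rfl fun k _ => ?_
    set u : Fin n → ℝ := Function.update (Function.update y i s) j t with hu
    have hui : u i = s := by
      rw [hu, Function.update_of_ne hij, Function.update_self]
    have huj : u j = t := by rw [hu, Function.update_self]
    have huo : ∀ l, l ≠ i → l ≠ j → u l = y l := fun l h1 h2 => by
      rw [hu, Function.update_of_ne h2, Function.update_of_ne h1]
    by_cases hik : i ∈ T k <;> by_cases hjk : j ∈ T k
    · have hj' : j ∈ (T k).erase i := Finset.mem_erase.mpr ⟨hij.symm, hjk⟩
      have hprod : ∏ l ∈ T k, (1 - u l) = (1 - s) * ((1 - t) * R k) := by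
        rw [← Finset.mul_prod_erase _ _ hik, ← Finset.mul_prod_erase _ _ hj',
            hui, huj]
        congr 1; congr 1
        refine Finset.prod_congr rfl fun l hl => ?_
        have h2 := Finset.mem_erase.mp hl
        have h1 := Finset.mem_erase.mp h2.2
        rw [huo l h1.1 h2.1]
      simp only [hik, hjk, true_and, and_true, false_and, and_false, true_or, or_true, or_false, false_or, if_true, if_false]
      rw [hprod]; ring
    · have hprod : ∏ l ∈ T k, (1 - u l) = (1 - s) * R k := by
        have hRk : R k = ∏ l ∈ (T k).erase i, (1 - y l) := by
          have he : ((T k).erase i).erase j = (T k).erase i :=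
            Finset.erase_eq_of_notMem (fun h => hjk (Finset.mem_of_mem_erase h))
          simp only [hR]; rw [he]
        rw [← Finset.mul_prod_erase _ _ hik, hui, hRk]
        congr 1
        refine Finset.prod_congr rfl fun l hl => ?_
        have h1 := Finset.mem_erase.mp hl
        rw [huo l h1.1 (by rintro rfl; exact hjk h1.2)]
      simp only [hik, hjk, true_and, and_true, false_and, and_false, true_or, or_true, or_false, false_or, if_true, if_false]
      rw [hprod]; ring
    · have hprod : ∏ l ∈ T k, (1 - u l) = (1 - t) * R k := by
        have hRk : R k = ∏ l ∈ (T k).erase j, (1 - y l) := by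
          have he : ((T k).erase i).erase j = ((T k).erase j).erase i := by
            rw [Finset.erase_right_comm]
          have he2 : ((T k).erase j).erase i = (T k).erase j :=
            Finset.erase_eq_of_notMem (fun h => hik (Finset.mem_of_mem_erase h))
          simp only [hR]; rw [he, he2]
        rw [← Finset.mul_prod_erase _ _ hjk, huj, hRk]
        congr 1
        refine Finset.prod_congr rfl fun l hl => ?_
        have h1 := Finset.mem_erase.mp hl
        rw [huo l (by rintro rfl; exact hik h1.2) h1.1]
      simp only [hik, hjk, true_and, and_true, false_and, and_false, true_or, or_true, or_false, false_or, if_true, if_false]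
      rw [hprod]; ring
    · have hprod : ∏ l ∈ T k, (1 - u l) = ∏ l ∈ T k, (1 - y l) := by
        refine Finset.prod_congr rfl fun l hl => ?_
        rw [huo l (by rintro rfl; exact hik hl) (by rintro rfl; exact hjk hl)]
      simp only [hik, hjk, true_and, and_true, false_and, and_false, true_or, or_true, or_false, false_or, if_true, if_false]
      rw [hprod]; ring

lemma pipage_step {n m : ℕ} (S : Fin n → Finset (Fin m)) (w : Fin m → ℝ)
    (hw : ∀ k, 0 ≤ w k) (c : Fin n → ℝ) (hc : ∀ i, 0 < c i)
    (y : Fin n → ℝ) (hy : ∀ l, y l ∈ Set.Icc (0:ℝ) 1)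
    (i j : Fin n) (hij : i ≠ j)
    (hfi : y i ≠ 0 ∧ y i ≠ 1) (hfj : y j ≠ 0 ∧ y j ≠ 1) :
    ∃ z : Fin n → ℝ, (∀ l, z l ∈ Set.Icc (0:ℝ) 1) ∧
      (∀ l, l ≠ i → l ≠ j → z l = y l) ∧
      (z i = 0 ∨ z i = 1 ∨ z j = 0 ∨ z j = 1) ∧
      (∑ l, c l * z l = ∑ l, c l * y l) ∧ coverF S w z ≥ coverF S w y := by
  classical
  obtain ⟨A, B, C, D, hA, hg⟩ :=
    affine_two S w hw y (fun l => (hy l).2) i j hij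
  set s₀ := y i with hs₀
  set t₀ := y j with ht₀
  have hs₀m : 0 ≤ s₀ ∧ s₀ ≤ 1 := ⟨(hy i).1, (hy i).2⟩
  have ht₀m : 0 ≤ t₀ ∧ t₀ ≤ 1 := ⟨(hy j).1, (hy j).2⟩
  have hcj := hc j
  have hci := hc i
  set Q : ℝ := -A * (c i * c j) with hQ
  have hQ0 : 0 ≤ Q := mul_nonneg (neg_nonneg.mpr hA) (by positivity)
  set E : ℝ := A * (c j * t₀ - c i * s₀) + B * c j - C * c i with hE
  set u : ℝ := if 0 ≤ E then min ((1 - s₀) / c j) (t₀ / c i)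
               else -(min (s₀ / c j) ((1 - t₀) / c i)) with hu
  set z : Fin n → ℝ :=
    Function.update (Function.update y i (s₀ + c j * u)) j (t₀ - c i * u) with hz
  have hzi : z i = s₀ + c j * u := by
    rw [hz, Function.update_of_ne hij, Function.update_self]
  have hzj : z j = t₀ - c i * u := by rw [hz, Function.update_self]
  have hzo : ∀ l, l ≠ i → l ≠ j → z l = y l := fun l h1 h2 => by
    rw [hz, Function.update_of_ne h2, Function.update_of_ne h1]
  have hy' : Function.update (Function.update y i (y i)) j (y j) = y := by
    rw [Function.update_eq_self, Function.update_eq_self]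
  have hFy : coverF S w y = A * (s₀ * t₀) + B * s₀ + C * t₀ + D := by
    conv_lhs => rw [← hy']
    exact hg s₀ t₀
  have hFz : coverF S w z = coverF S w y + (Q * u ^ 2 + E * u) := by
    rw [hz, hg, hFy, hQ, hE]; ring
  have hkey : 0 ≤ E * u ∧
      ((0 ≤ u ∧ s₀ + c j * u ≤ 1 ∧ 0 ≤ t₀ - c i * u ∧
        (s₀ + c j * u = 1 ∨ t₀ - c i * u = 0)) ∨
       (u ≤ 0 ∧ 0 ≤ s₀ + c j * u ∧ t₀ - c i * u ≤ 1 ∧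
        (s₀ + c j * u = 0 ∨ t₀ - c i * u = 1))) := by
    by_cases hEpos : 0 ≤ E
    · have hu' : u = min ((1 - s₀) / c j) (t₀ / c i) := by rw [hu, if_pos hEpos]
      have hu0 : 0 ≤ u := by
        rw [hu']
        exact le_min (div_nonneg (by linarith [hs₀m.2]) hcj.le)
          (div_nonneg ht₀m.1 hci.le)
      have h1 : u ≤ (1 - s₀) / c j := hu' ▸ min_le_left _ _
      have h1' : u * c j ≤ 1 - s₀ := (le_div_iff₀ hcj).mp h1
      have h2 : u ≤ t₀ / c i := hu' ▸ min_le_right _ _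
      have h2' : u * c i ≤ t₀ := (le_div_iff₀ hci).mp h2
      refine ⟨mul_nonneg hEpos hu0, Or.inl ⟨hu0, by linarith, by linarith, ?_⟩⟩
      rcases min_choice ((1 - s₀) / c j) (t₀ / c i) with h | h
      · left
        rw [hu', h]
        field_simp
        try ring
      · right
        rw [hu', h]
        field_simp
        try ring
    · have hu' : u = -(min (s₀ / c j) ((1 - t₀) / c i)) := by rw [hu, if_neg hEpos]
      have hu0 : u ≤ 0 := by
        rw [hu']
        refine neg_nonpos.mpr (le_min (div_nonneg hs₀m.1 hcj.le)
          (div_nonneg (by linarith [ht₀m.2]) hci.le))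
      have h1 : -u ≤ s₀ / c j := by
        rw [hu', neg_neg]; exact min_le_left _ _
      have h1' : -u * c j ≤ s₀ := (le_div_iff₀ hcj).mp h1
      have h2 : -u ≤ (1 - t₀) / c i := by
        rw [hu', neg_neg]; exact min_le_right _ _
      have h2' : -u * c i ≤ 1 - t₀ := (le_div_iff₀ hci).mp h2
      refine ⟨by nlinarith [hu0],
        Or.inr ⟨hu0, by linarith, by linarith, ?_⟩⟩
      rcases min_choice (s₀ / c j) ((1 - t₀) / c i) with h | h
      · left
        rw [hu', h]
        field_simp
        try ring
      · right
        rw [hu', h]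
        field_simp
        try ring
  refine ⟨z, ?_, hzo, ?_, ?_, ?_⟩
  · intro l
    by_cases hli : l = i
    · subst hli
      rw [hzi]
      have hcu : 0 ≤ c j * u ∨ c j * u ≤ 0 := by
        rcases hkey.2 with ⟨h, _⟩ | ⟨h, _⟩
        · exact Or.inl (mul_nonneg hcj.le h)
        · exact Or.inr (mul_nonpos_of_nonneg_of_nonpos hcj.le h)
      rcases hkey.2 with ⟨h0, h1, _, _⟩ | ⟨h0, h1, _, _⟩
      · exact ⟨by nlinarith, h1⟩
      · exact ⟨h1, by nlinarith⟩
    by_cases hlj : l = j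
    · subst hlj
      rw [hzj]
      rcases hkey.2 with ⟨h0, _, h1, _⟩ | ⟨h0, _, h1, _⟩
      · exact ⟨h1, by nlinarith⟩
      · exact ⟨by nlinarith, h1⟩
    · rw [hzo l hli hlj]; exact hy l
  · rcases hkey.2 with ⟨_, _, _, h | h⟩ | ⟨_, _, _, h | h⟩
    · exact Or.inr (Or.inl (hzi.trans h))
    · exact Or.inr (Or.inr (Or.inl (hzj.trans h)))
    · exact Or.inl (hzi.trans h)
    · exact Or.inr (Or.inr (Or.inr (hzj.trans h)))
  · have hzl : ∀ l, z l = y l + (if l = i then c j * u else 0)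
        + (if l = j then -(c i * u) else 0) := by
      intro l
      by_cases hli : l = i
      · subst hli
        rw [hzi, if_pos rfl, if_neg hij]; ring
      by_cases hlj : l = j
      · subst hlj
        rw [hzj, if_neg hli, if_pos rfl]; ring
      · rw [hzo l hli hlj, if_neg hli, if_neg hlj]; ring
    have : ∑ l, c l * z l = ∑ l, (c l * y l + (if l = i then c l * (c j * u) else 0)
        + (if l = j then c l * (-(c i * u)) else 0)) := by
      refine Finset.sum_congr rfl fun l _ => ?_
      rw [hzl l]
      split_ifs <;> ring
    rw [this, Finset.sum_add_distrib, Finset.sum_add_distrib,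
        Finset.sum_ite_eq' univ i (fun l => c l * (c j * u)),
        Finset.sum_ite_eq' univ j (fun l => c l * (-(c i * u)))]
    simp only [Finset.mem_univ, if_true]
    ring
  · rw [hFz]
    have h1 : 0 ≤ Q * u ^ 2 := mul_nonneg hQ0 (sq_nonneg u)
    linarith [hkey.1]

lemma pipage {n m : ℕ} (S : Fin n → Finset (Fin m)) (w : Fin m → ℝ)
    (hw : ∀ k, 0 ≤ w k) (c : Fin n → ℝ) (hc : ∀ i, 0 < c i) :
    ∀ N : ℕ, ∀ y : Fin n → ℝ, (∀ l, y l ∈ Set.Icc (0:ℝ) 1) →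
      (univ.filter (fun l => y l ≠ 0 ∧ y l ≠ 1)).card ≤ N →
      ∃ z : Fin n → ℝ, (∀ l, z l ∈ Set.Icc (0:ℝ) 1) ∧
        (univ.filter (fun l => z l ≠ 0 ∧ z l ≠ 1)).card ≤ 1 ∧
        ∑ l, c l * z l = ∑ l, c l * y l ∧ coverF S w z ≥ coverF S w y := by
  classical
  intro N
  induction N with
  | zero =>
      intro y hy hcard
      exact ⟨y, hy, le_trans hcard (by norm_num), rfl, le_refl _⟩
  | succ N ih =>
      intro y hy hcard
      by_cases hsmall : (univ.filter (fun l => y l ≠ 0 ∧ y l ≠ 1)).card ≤ 1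
      · exact ⟨y, hy, hsmall, rfl, le_refl _⟩
      · obtain ⟨i, hi, j, hj, hij⟩ :=
          Finset.one_lt_card.mp (lt_of_not_ge hsmall)
        have hfi := (Finset.mem_filter.mp hi).2
        have hfj := (Finset.mem_filter.mp hj).2
        obtain ⟨z, hzbox, hzo, hzint, hzsum, hzF⟩ :=
          pipage_step S w hw c hc y hy i j hij hfi hfj
        have hsub : (univ.filter (fun l => z l ≠ 0 ∧ z l ≠ 1)) ⊆
            (univ.filter (fun l => y l ≠ 0 ∧ y l ≠ 1)) := by
          intro l hl
          have hl' := (Finset.mem_filter.mp hl).2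
          by_cases hli : l = i
          · subst hli; exact hi
          by_cases hlj : l = j
          · subst hlj; exact hj
          · refine Finset.mem_filter.mpr ⟨Finset.mem_univ _, ?_⟩
            rw [← hzo l hli hlj]; exact hl'
        have hstrict : (univ.filter (fun l => z l ≠ 0 ∧ z l ≠ 1)).card <
            (univ.filter (fun l => y l ≠ 0 ∧ y l ≠ 1)).card := by
          refine Finset.card_lt_card (Finset.ssubset_iff_of_subset hsub |>.mpr ?_)
          rcases hzint with h | h | h | h
          · exact ⟨i, hi, fun hmem => ((Finset.mem_filter.mp hmem).2).1 h⟩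
          · exact ⟨i, hi, fun hmem => ((Finset.mem_filter.mp hmem).2).2 h⟩
          · exact ⟨j, hj, fun hmem => ((Finset.mem_filter.mp hmem).2).1 h⟩
          · exact ⟨j, hj, fun hmem => ((Finset.mem_filter.mp hmem).2).2 h⟩
        obtain ⟨z', h1, h2, h3, h4⟩ := ih z hzbox (by omega)
        exact ⟨z', h1, h2, h3.trans hzsum, le_trans hzF h4⟩

/-- Budget-preserving derandomized rounding: from any fractional `y` of budget
`L` one obtains an integral `ỹ` of budget at most `L + maxᵢ cᵢ` with
`F(ỹ) ≥ F(y)`. -/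
theorem budget_preserving_rounding {n m : ℕ} (hn : 0 < n)
    (S : Fin n → Finset (Fin m)) (w : Fin m → ℝ) (hw : ∀ k, 0 ≤ w k)
    (c : Fin n → ℝ) (hc : ∀ i, 0 < c i) (L : ℝ)
    (y : Fin n → ℝ) (hy : ∀ i, y i ∈ Set.Icc (0 : ℝ) 1)
    (hsum : ∑ i, c i * y i = L) :
    ∃ ytil : Fin n → ℝ, (∀ i, ytil i = 0 ∨ ytil i = 1) ∧
      ∑ i, c i * ytil i ≤ L + Finset.univ.sup' ⟨⟨0, hn⟩, Finset.mem_univ _⟩ c ∧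
      coverF S w ytil ≥ coverF S w y := by
  classical
  obtain ⟨z, hzbox, hzcard, hzsum, hzF⟩ :=
    pipage S w hw c hc n y hy (le_trans (Finset.card_filter_le _ _) (by simp))
  have hzsum' : ∑ l, c l * z l = L := hzsum.trans hsum
  have hsup : ∀ i : Fin n, c i ≤ Finset.univ.sup' ⟨⟨0, hn⟩, Finset.mem_univ _⟩ c :=
    fun i => Finset.le_sup' c (Finset.mem_univ i)
  have hsup0 : 0 < Finset.univ.sup' ⟨⟨0, hn⟩, Finset.mem_univ _⟩ c :=
    lt_of_lt_of_le (hc ⟨0, hn⟩) (hsup _)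
  by_cases hempty : (univ.filter (fun l => z l ≠ 0 ∧ z l ≠ 1)) = ∅
  · refine ⟨z, fun i => ?_, by linarith [hzsum'.le], hzF⟩
    have : i ∉ (univ.filter (fun l => z l ≠ 0 ∧ z l ≠ 1)) := by
      rw [hempty]; exact Finset.notMem_empty i
    simp only [Finset.mem_filter, Finset.mem_univ, true_and, not_and_or,
      not_not] at this
    tauto
  · obtain ⟨i, hi⟩ := Finset.nonempty_of_ne_empty hempty
    have huniq : ∀ l, l ≠ i → (z l = 0 ∨ z l = 1) := by
      intro l hl
      by_contra hcon
      push_neg at hcon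
      have hlmem : l ∈ (univ.filter (fun l => z l ≠ 0 ∧ z l ≠ 1)) :=
        Finset.mem_filter.mpr ⟨Finset.mem_univ _, hcon⟩
      have : 1 < (univ.filter (fun l => z l ≠ 0 ∧ z l ≠ 1)).card :=
        Finset.one_lt_card.mpr ⟨l, hlmem, i, hi, hl⟩
      omega
    obtain ⟨B, D, hB, hBD⟩ := affine_one S w hw z (fun l => (hzbox l).2) i
    refine ⟨Function.update z i 1, ?_, ?_, ?_⟩
    · intro l
      by_cases hl : l = i
      · subst hl; right; rw [Function.update_self]
      · rw [Function.update_of_ne hl]; exact huniq l hl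
    · have hupd : ∀ l, Function.update z i 1 l
          = z l + (if l = i then 1 - z i else 0) := by
        intro l
        by_cases hl : l = i
        · subst hl; rw [Function.update_self, if_pos rfl]; ring
        · rw [Function.update_of_ne hl, if_neg hl]; ring
      have : ∑ l, c l * Function.update z i 1 l
          = ∑ l, (c l * z l + (if l = i then c l * (1 - z i) else 0)) := by
        refine Finset.sum_congr rfl fun l _ => ?_
        rw [hupd l]; split_ifs <;> ring
      rw [this, Finset.sum_add_distrib,
          Finset.sum_ite_eq' univ i (fun l => c l * (1 - z i))]
      simp only [Finset.mem_univ, if_true]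
      have h1 : c i * (1 - z i) ≤ c i := by
        have := (hzbox i).1
        nlinarith [hc i]
      linarith [hsup i, hzsum'.le]
    · have hF1 : coverF S w (Function.update z i 1) = B * 1 + D := hBD 1
      have hFz : coverF S w z = B * z i + D := by
        conv_lhs => rw [← Function.update_eq_self i z]
        exact hBD (z i)
      have : coverF S w (Function.update z i 1) ≥ coverF S w z := by
        rw [hF1, hFz]
        have := (hzbox i).2
        nlinarith
      linarith [hzF]
end

section
/- Let F(y) = Σₖ wₖ(1 − ∏_{j : k ∈ Sⱼ}(1 − yⱼ)) with wₖ ≥ 0 and y ∈ [0,1]ⁿ. If yᵢ, yⱼ ∈ (0,1) and ∂F/∂yᵢ (y) ≥ ∂F/∂yⱼ (y), and Sᵢ ∩ Sⱼ counts only nonnegatively-weighted common elements, then for all sufficiently small δ > 0, F(y + δeᵢ − δeⱼ) ≥ F(y). -/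
open Finset

namespace GPMaux

variable {n m : ℕ}

/-- Coefficient of the linear term when varying coordinate `i`. -/
noncomputable def Dc (S : Fin n → Finset (Fin m)) (w : Fin m → ℝ)
    (y : Fin n → ℝ) (i : Fin n) : ℝ :=
  ∑ k : Fin m, w k * (if k ∈ S i then
    ∏ j' ∈ (Finset.univ.filter (fun j' => k ∈ S j')).erase i, (1 - y j') else 0)

/-- Coefficient of the quadratic term for the pair `(i, j)`. -/
noncomputable def Qc (S : Fin n → Finset (Fin m)) (w : Fin m → ℝ)
    (y : Fin n → ℝ) (i j : Fin n) : ℝ :=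
  ∑ k : Fin m, w k * (if k ∈ S i ∧ k ∈ S j then
    ∏ j' ∈ ((Finset.univ.filter (fun j' => k ∈ S j')).erase i).erase j, (1 - y j') else 0)

lemma prod_update_one (y : Fin n → ℝ) (i : Fin n) (t : ℝ) (T : Finset (Fin n)) :
    ∏ j' ∈ T, (1 - Function.update y i t j')
      = ∏ j' ∈ T, (1 - y j')
        + (y i - t) * (if i ∈ T then ∏ j' ∈ T.erase i, (1 - y j') else 0) := by
  by_cases hiT : i ∈ T
  · rw [← Finset.mul_prod_erase T (fun j' => 1 - Function.update y i t j') hiT,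
      ← Finset.mul_prod_erase T (fun j' => 1 - y j') hiT, if_pos hiT]
    have h1 : ∏ j' ∈ T.erase i, (1 - Function.update y i t j')
        = ∏ j' ∈ T.erase i, (1 - y j') := by
      refine Finset.prod_congr rfl (fun x hx => ?_)
      rw [Function.update_of_ne (Finset.ne_of_mem_erase hx)]
    rw [h1, Function.update_self]
    ring
  · rw [if_neg hiT]
    have h1 : ∏ j' ∈ T, (1 - Function.update y i t j') = ∏ j' ∈ T, (1 - y j') := by
      refine Finset.prod_congr rfl (fun x hx => ?_)
      rw [Function.update_of_ne (by rintro rfl; exact hiT hx)]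
    rw [h1]; ring

lemma cover_update_eq (S : Fin n → Finset (Fin m)) (w : Fin m → ℝ)
    (y : Fin n → ℝ) (i : Fin n) (t : ℝ) :
    coverF S w (Function.update y i t) = coverF S w y + (t - y i) * Dc S w y i := by
  unfold coverF Dc
  rw [Finset.mul_sum, ← Finset.sum_add_distrib]
  refine Finset.sum_congr rfl (fun k _ => ?_)
  have hmem : i ∈ Finset.univ.filter (fun j' => k ∈ S j') ↔ k ∈ S i := by simp
  rw [prod_update_one y i t]
  by_cases hk : k ∈ S i
  · rw [if_pos (hmem.mpr hk), if_pos hk]; ring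
  · rw [if_neg (fun h => hk (hmem.mp h)), if_neg hk]; ring

lemma deriv_cover (S : Fin n → Finset (Fin m)) (w : Fin m → ℝ)
    (y : Fin n → ℝ) (i : Fin n) :
    deriv (fun t => coverF S w (Function.update y i t)) (y i) = Dc S w y i := by
  have heq : (fun t => coverF S w (Function.update y i t))
      = fun t => coverF S w y + (t - y i) * Dc S w y i :=
    funext (fun t => cover_update_eq S w y i t)
  rw [heq]
  have h : HasDerivAt (fun t : ℝ => coverF S w y + (t - y i) * Dc S w y i)
      (Dc S w y i) (y i) := by
    simpa using
      ((((hasDerivAt_id (y i)).sub_const (y i)).mul_const (Dc S w y i)).const_add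
        (coverF S w y))
  exact h.deriv

lemma cover_shift (S : Fin n → Finset (Fin m)) (w : Fin m → ℝ)
    (y : Fin n → ℝ) (i j : Fin n) (hij : i ≠ j) (δ : ℝ) :
    coverF S w (Function.update (Function.update y i (y i + δ)) j (y j - δ))
      = coverF S w y + δ * (Dc S w y i - Dc S w y j) + δ ^ 2 * Qc S w y i j := by
  unfold coverF Dc Qc
  rw [← Finset.sum_sub_distrib]
  simp only [Finset.mul_sum]
  rw [← Finset.sum_add_distrib, ← Finset.sum_add_distrib]
  refine Finset.sum_congr rfl (fun k _ => ?_)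
  set T : Finset (Fin n) := Finset.univ.filter (fun j' => k ∈ S j') with hT
  have hmi : i ∈ T ↔ k ∈ S i := by simp [hT]
  have hmj : j ∈ T ↔ k ∈ S j := by simp [hT]
  set y' : Fin n → ℝ := Function.update y i (y i + δ) with hy'
  have step1 : ∏ j' ∈ T, (1 - Function.update y' j (y j - δ) j')
      = ∏ j' ∈ T, (1 - y' j')
        + δ * (if j ∈ T then ∏ j' ∈ T.erase j, (1 - y' j') else 0) := by
    have := prod_update_one y' j (y j - δ) T
    have hyj : y' j = y j := Function.update_of_ne hij.symm _ _
    rw [hyj] at this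
    convert this using 2
    ring
  have step2 : ∏ j' ∈ T, (1 - y' j')
      = ∏ j' ∈ T, (1 - y j') - δ * (if i ∈ T then ∏ j' ∈ T.erase i, (1 - y j') else 0) := by
    have := prod_update_one y i (y i + δ) T
    rw [hy']; rw [this]; ring
  have step3 : ∏ j' ∈ T.erase j, (1 - y' j')
      = ∏ j' ∈ T.erase j, (1 - y j')
        - δ * (if i ∈ T then ∏ j' ∈ (T.erase i).erase j, (1 - y j') else 0) := by
    have h := prod_update_one y i (y i + δ) (T.erase j)
    have hi' : i ∈ T.erase j ↔ i ∈ T := by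
      constructor
      · exact Finset.mem_of_mem_erase
      · intro h'; exact Finset.mem_erase.mpr ⟨hij, h'⟩
    have hcomm : (T.erase j).erase i = (T.erase i).erase j := Finset.erase_right_comm
    rw [hy']; rw [h, hcomm]
    by_cases hiT : i ∈ T
    · rw [if_pos (hi'.mpr hiT), if_pos hiT]; ring
    · rw [if_neg (fun h'' => hiT (hi'.mp h'')), if_neg hiT]; ring
  rw [step1, step2]
  by_cases hiT : i ∈ T <;> by_cases hjT : j ∈ T
  · rw [if_pos hiT, if_pos hjT, step3, if_pos hiT,
      if_pos (hmi.mp hiT), if_pos (hmj.mp hjT), if_pos ⟨hmi.mp hiT, hmj.mp hjT⟩]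
    ring
  · rw [if_pos hiT, if_neg hjT, if_pos (hmi.mp hiT),
      if_neg (fun h => hjT (hmj.mpr h)),
      if_neg (fun h => hjT (hmj.mpr h.2))]
    ring
  · rw [if_neg hiT, if_pos hjT, step3, if_neg hiT,
      if_neg (fun h => hiT (hmi.mpr h)), if_pos (hmj.mp hjT),
      if_neg (fun h => hiT (hmi.mpr h.1))]
    ring
  · rw [if_neg hiT, if_neg hjT,
      if_neg (fun h => hiT (hmi.mpr h)),
      if_neg (fun h => hjT (hmj.mpr h)),
      if_neg (fun h => hiT (hmi.mpr h.1))]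
    ring

lemma Qc_nonneg (S : Fin n → Finset (Fin m)) (w : Fin m → ℝ) (hw : ∀ k, 0 ≤ w k)
    (y : Fin n → ℝ) (hy : ∀ k, y k ∈ Set.Icc (0 : ℝ) 1) (i j : Fin n) :
    0 ≤ Qc S w y i j := by
  refine Finset.sum_nonneg (fun k _ => ?_)
  refine mul_nonneg (hw k) ?_
  split
  · exact Finset.prod_nonneg (fun x _ => by linarith [(hy x).2])
  · exact le_refl 0

end GPMaux

/-- Gradient-based pair move: if `∂F/∂yᵢ ≥ ∂F/∂yⱼ` at `y`, then moving a small
amount of mass from `yⱼ` to `yᵢ` does not decrease `F`. -/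
theorem gradient_pair_move {n m : ℕ} (S : Fin n → Finset (Fin m))
    (w : Fin m → ℝ) (hw : ∀ k, 0 ≤ w k)
    (y : Fin n → ℝ) (hy : ∀ k, y k ∈ Set.Icc (0 : ℝ) 1)
    (i j : Fin n) (hij : i ≠ j)
    (hi : y i ∈ Set.Ioo (0 : ℝ) 1) (hj : y j ∈ Set.Ioo (0 : ℝ) 1)
    (hgrad : deriv (fun t => coverF S w (Function.update y i t)) (y i) ≥
             deriv (fun t => coverF S w (Function.update y j t)) (y j)) :
    ∃ δ₀ : ℝ, 0 < δ₀ ∧ ∀ δ : ℝ, 0 < δ → δ ≤ δ₀ →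
      coverF S w (Function.update (Function.update y i (y i + δ)) j (y j - δ)) ≥
        coverF S w y := by
  refine ⟨1, one_pos, fun δ hδ _ => ?_⟩
  rw [GPMaux.cover_shift S w y i j hij δ]
  have hD : GPMaux.Dc S w y i - GPMaux.Dc S w y j ≥ 0 := by
    rw [GPMaux.deriv_cover, GPMaux.deriv_cover] at hgrad
    linarith
  have hQ := GPMaux.Qc_nonneg S w hw y hy i j
  nlinarith [sq_nonneg δ]
end

section
/- Let y₁,…,yₙ be {0,1}-valued random variables that are negatively correlated in the sense that for every subset T ⊆ [n], P(∀i∈T, yᵢ = 1) ≤ ∏_{i∈T} P(yᵢ = 1) and P(∀i∈T, yᵢ = 0) ≤ ∏_{i∈T} P(yᵢ = 0), with P(yⱼ = 1) = pⱼ. Then for any fixed set S ⊆ [n], E[1 − ∏_{j∈S}(1 − yⱼ)] ≥ 1 − ∏_{j∈S}(1 − pⱼ). -/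
open MeasureTheory Finset

/-- Negatively correlated {0,1}-valued random variables cover at least as well
as independent ones: `E[1 - ∏_{j∈S}(1 - yⱼ)] ≥ 1 - ∏_{j∈S}(1 - pⱼ)`. -/
theorem negcorr_coverage {Ω : Type*} [MeasurableSpace Ω]
    (μ : Measure Ω) [IsProbabilityMeasure μ]
    (n : ℕ) (y : Fin n → Ω → ℝ) (hmeas : ∀ i, Measurable (y i))
    (hvals : ∀ i ω, y i ω = 0 ∨ y i ω = 1)
    (p : Fin n → ℝ) (hp : ∀ j, p j = (μ {ω | y j ω = 1}).toReal)
    (hneg1 : ∀ T : Finset (Fin n),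
      μ {ω | ∀ i ∈ T, y i ω = 1} ≤ ∏ i ∈ T, μ {ω | y i ω = 1})
    (hneg0 : ∀ T : Finset (Fin n),
      μ {ω | ∀ i ∈ T, y i ω = 0} ≤ ∏ i ∈ T, μ {ω | y i ω = 0})
    (S : Finset (Fin n)) :
    ∫ ω, (1 - ∏ j ∈ S, (1 - y j ω)) ∂μ ≥ 1 - ∏ j ∈ S, (1 - p j) := by
  set A : Set Ω := {ω | ∀ i ∈ S, y i ω = 0} with hA
  have hAmeas : MeasurableSet A := by
    have : A = ⋂ i ∈ S, {ω | y i ω = 0} := by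
      ext ω; simp [hA]
    rw [this]
    exact MeasurableSet.biInter S.countable_toSet
      (fun i _ => (hmeas i) (measurableSet_singleton 0))
  -- the product is the indicator of A
  have hind : ∀ ω, (∏ j ∈ S, (1 - y j ω)) = A.indicator (fun _ => (1:ℝ)) ω := by
    intro ω
    by_cases h : ω ∈ A
    · rw [Set.indicator_of_mem h]
      refine Finset.prod_eq_one fun j hj => by rw [h j hj]; ring
    · rw [Set.indicator_of_notMem h]
      simp only [hA, Set.mem_setOf_eq, not_forall] at h
      obtain ⟨j, hj, hj0⟩ := h
      have : y j ω = 1 := (hvals j ω).resolve_left hj0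
      exact Finset.prod_eq_zero hj (by rw [this]; ring)
  have hintind : Integrable (A.indicator (fun _ => (1:ℝ))) μ :=
    (integrable_const 1).indicator hAmeas
  have hint : ∫ ω, (1 - ∏ j ∈ S, (1 - y j ω)) ∂μ = 1 - (μ A).toReal := by
    have : ∫ ω, (1 - ∏ j ∈ S, (1 - y j ω)) ∂μ
        = ∫ ω, ((1:ℝ) - A.indicator (fun _ => (1:ℝ)) ω) ∂μ := by
      refine integral_congr_ae (Filter.Eventually.of_forall fun ω => ?_)
      simp only [hind ω]
    rw [this, integral_sub (integrable_const 1) hintind, integral_const,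
      Measure.real, measure_univ, ENNReal.toReal_one, one_smul]
    congr 1
    exact integral_indicator_one hAmeas
  -- μ{y j = 0} = 1 - μ{y j = 1}
  have hcomp : ∀ j, μ {ω | y j ω = 0} = 1 - μ {ω | y j ω = 1} := by
    intro j
    have hset : {ω | y j ω = 0} = {ω | y j ω = 1}ᶜ := by
      ext ω
      simp only [Set.mem_setOf_eq, Set.mem_compl_iff]
      constructor
      · intro h h1; rw [h] at h1; norm_num at h1
      · intro h; exact (hvals j ω).resolve_right h
    rw [hset]
    exact prob_compl_eq_one_sub ((hmeas j) (measurableSet_singleton 1))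
  have hple : ∀ j, μ {ω | y j ω = 1} ≤ 1 := fun j => prob_le_one
  have hbound : (μ A).toReal ≤ ∏ j ∈ S, (1 - p j) := by
    have h1 : μ A ≤ ∏ j ∈ S, (1 - μ {ω | y j ω = 1}) := by
      calc μ A ≤ ∏ i ∈ S, μ {ω | y i ω = 0} := hneg0 S
        _ = ∏ j ∈ S, (1 - μ {ω | y j ω = 1}) := Finset.prod_congr rfl fun j _ => hcomp j
    have hfin : (∏ j ∈ S, (1 - μ {ω | y j ω = 1})) ≠ ⊤ := by
      refine (ENNReal.prod_lt_top fun j _ => ?_).ne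
      exact lt_of_le_of_lt (tsub_le_self) ENNReal.one_lt_top
    calc (μ A).toReal ≤ (∏ j ∈ S, (1 - μ {ω | y j ω = 1})).toReal :=
          ENNReal.toReal_mono hfin h1
      _ = ∏ j ∈ S, (1 - μ {ω | y j ω = 1}).toReal := ENNReal.toReal_prod _ _
      _ = ∏ j ∈ S, (1 - p j) := by
          refine Finset.prod_congr rfl fun j _ => ?_
          rw [hp j, ENNReal.toReal_sub_of_le (hple j) ENNReal.one_ne_top,
            ENNReal.toReal_one]
  rw [hint]
  linarith
end
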